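/- Let G be a connected bipartite graph on vertex set V with bipartition V1 ∋ 0 and V2, let c ∈ R^E, and let P_{G,c} = {u ∈ R^V : -u(a)+u(b) ≤ c(ab) for all edges ab with a ∈ V1, b ∈ V2, u(0) = 0}, assumed generic so that every vertex of P_{G,c} corresponds to a spanning tree of tight edges. Then the circuit diameter of P_{G,c} is at most |V| - 1. -/

import Mathlib

/-!
Let `T` be the tight spanning tree of the target vertex `u`. Grow a set `A ∋ z`, connected in
`G`, on which the current point `y` agrees with `u`, adding one `T`-neighbour `v` of `A` at a
time. If `y v ≠ u v`, tightness of the tree edge `pv` for `u` and feasibility of `y` say on which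
side of `u v` the value `y v` lies. Let `K` consist of `v` and of those neighbours of `v` whose
edge to `v` would become infeasible before `pv` becomes tight, and let `R` be the component of
`z` in `G - K`. Both `R` and its complement are connected, so shifting the complement of `R` is a
circuit direction; moving it by `u v - y v` keeps feasibility, fixes `A`, and makes `pv` tight, so
the step has maximal length. Each of the `|V| - 1` vertices other than `z` costs at most one step.
-/

/-- The dual transportation polyhedron on a bipartite graph G with parts V1, V2,
costs c, and distinguished node z (normalized by u(z) = 0). -/
def dualTransportPoly {V : Type*} (G : SimpleGraph V) (V1 V2 : Set V) (z : V)
    (c : V → V → ℝ) : Set (V → ℝ) :=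
  {u | (∀ a b, a ∈ V1 → b ∈ V2 → G.Adj a b → -u a + u b ≤ c a b) ∧ u z = 0}

/-- The circuits of the dual transportation polyhedron: signed indicator vectors
of partitions V = R ∪ S into nonempty sets inducing connected subgraphs of G
with z ∈ R. -/
def dualTransportCircuits {V : Type*} (G : SimpleGraph V) (z : V) :
    Set (V → ℝ) :=
  {g | ∃ R S : Set V, R.Nonempty ∧ S.Nonempty ∧ Disjoint R S ∧
    R ∪ S = Set.univ ∧ z ∈ R ∧
    (G.induce R).Connected ∧ (G.induce S).Connected ∧
    (((∀ i ∈ R, g i = 0) ∧ (∀ i ∈ S, g i = 1)) ∨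
     ((∀ i ∈ R, g i = 0) ∧ (∀ i ∈ S, g i = -1)))}

/-- A vertex of the (generic) dual transportation polyhedron: a feasible point
whose tight edges form a spanning tree of G. -/
def IsDTVertex {V : Type*} (G : SimpleGraph V) (V1 V2 : Set V) (z : V)
    (c : V → V → ℝ) (u : V → ℝ) : Prop :=
  u ∈ dualTransportPoly G V1 V2 z c ∧
  ∃ T : SimpleGraph V, T ≤ G ∧ T.Connected ∧ T.IsAcyclic ∧
    ∀ a b, a ∈ V1 → b ∈ V2 → G.Adj a b → (-u a + u b = c a b ↔ T.Adj a b)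

/-- A circuit walk of length k from v to w: feasible points, each step a
positive multiple of a circuit taken with maximal feasible length. -/
def IsDTCircuitWalk {V : Type*} (G : SimpleGraph V) (V1 V2 : Set V) (z : V)
    (c : V → V → ℝ) (k : ℕ) (y : ℕ → V → ℝ) (v w : V → ℝ) : Prop :=
  y 0 = v ∧ y k = w ∧ (∀ i ≤ k, y i ∈ dualTransportPoly G V1 V2 z c) ∧
  ∀ i < k, ∃ g ∈ dualTransportCircuits G z, ∃ α : ℝ, 0 < α ∧
    y (i + 1) = y i + α • g ∧
    ∀ β : ℝ, α < β → y i + β • g ∉ dualTransportPoly G V1 V2 z c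

namespace SimpleGraph

variable {V : Type*} (G : SimpleGraph V)

def reachWithin (U : Set V) (z : V) : Set V :=
  {x | Relation.ReflTransGen (fun a b => G.Adj a b ∧ a ∈ U ∧ b ∈ U) z x}

variable {G} {U U' : Set V} {z x w v : V}

lemma self_mem_reachWithin : z ∈ G.reachWithin U z := .refl

lemma reachWithin_subset (hz : z ∈ U) : G.reachWithin U z ⊆ U := fun _ hx => by
  rcases hx.cases_tail with rfl | ⟨_, _, h⟩
  exacts [hz, h.2.2]

lemma reachWithin_mono (h : U ⊆ U') : G.reachWithin U z ⊆ G.reachWithin U' z := fun _ hx =>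
  Relation.ReflTransGen.mono (fun _ _ hab => ⟨hab.1, h hab.2.1, h hab.2.2⟩) _ _ hx

lemma mem_reachWithin_of_adj (hx : x ∈ G.reachWithin U z) (hxw : G.Adj x w) (hxU : x ∈ U)
    (hwU : w ∈ U) : w ∈ G.reachWithin U z :=
  hx.tail ⟨hxw, hxU, hwU⟩

lemma connected_induce_reachWithin : (G.induce (G.reachWithin U z)).Connected := by
  refine (connected_iff_exists_forall_reachable _).2 ⟨⟨z, self_mem_reachWithin⟩, ?_⟩
  rintro ⟨x, hx⟩
  induction hx with
  | refl => rfl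
  | tail hzb hbc ih => exact ih.trans (Adj.reachable (G := G.induce _) hbc.1)

lemma insert_subset_reachWithin_insert {A : Set V} {p : V} (hA : A ⊆ G.reachWithin A z)
    (hp : p ∈ A) (hpv : G.Adj p v) : insert v A ⊆ G.reachWithin (insert v A) z := by
  have hmono := reachWithin_mono (G := G) (z := z) (Set.subset_insert v A)
  refine Set.insert_subset ?_ (hA.trans hmono)
  exact mem_reachWithin_of_adj (hmono (hA hp)) hpv (.inr hp) (.inl rfl)

/-- A walk from a vertex outside the component of `z` to `z` leaves `U` just before entering
the component, at `v` or at a neighbour of `v`. -/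
lemma connected_induce_compl_reachWithin (hG : G.Connected) (hz : z ∈ U) (hv : v ∉ U)
    (hUv : ∀ x ∉ U, x = v ∨ G.Adj x v) : (G.induce (G.reachWithin U z)ᶜ).Connected := by
  set R := G.reachWithin U z
  have hvR : v ∈ Rᶜ := fun h => hv (reachWithin_subset hz h)
  refine (connected_iff_exists_forall_reachable _).2 ⟨⟨v, hvR⟩, ?_⟩
  suffices key : ∀ x t (W : G.Walk x t), t ∈ R → ∀ hx : x ∈ Rᶜ,
      (G.induce Rᶜ).Reachable ⟨x, hx⟩ ⟨v, hvR⟩ by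
    rintro ⟨x, hx⟩
    exact (key x z (hG.preconnected x z).some self_mem_reachWithin hx).symm
  intro x t W ht
  induction W with
  | nil => exact fun hx => absurd ht hx
  | @cons a b _ hab W ih =>
    intro ha
    by_cases hb : b ∈ R
    · have haU : a ∉ U := fun haU =>
        ha (mem_reachWithin_of_adj hb hab.symm (reachWithin_subset hz hb) haU)
      rcases hUv a haU with rfl | hav
      · rfl
      · exact Adj.reachable (G := G.induce Rᶜ) hav
    · exact (Adj.reachable (G := G.induce Rᶜ) (u := ⟨a, ha⟩) (v := ⟨b, hb⟩) hab).trans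
        (ih ht hb)

end SimpleGraph

def IsDTCircuitStep {V : Type*} (G : SimpleGraph V) (V1 V2 : Set V) (z : V)
    (c : V → V → ℝ) (y y' : V → ℝ) : Prop :=
  ∃ g ∈ dualTransportCircuits G z, ∃ α : ℝ, 0 < α ∧ y' = y + α • g ∧
    ∀ β : ℝ, α < β → y + β • g ∉ dualTransportPoly G V1 V2 z c

section DualTransport

variable {V : Type*} {G : SimpleGraph V} {V1 V2 : Set V} {z : V} {c : V → V → ℝ}

open SimpleGraph

lemma IsDTCircuitWalk.refl {y : V → ℝ} (hy : y ∈ dualTransportPoly G V1 V2 z c) :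
    IsDTCircuitWalk G V1 V2 z c 0 (fun _ => y) y y :=
  ⟨rfl, rfl, fun _ _ => hy, fun _ h => absurd h (Nat.not_lt_zero _)⟩

lemma IsDTCircuitWalk.cons {k : ℕ} {w : ℕ → V → ℝ} {y y' y'' : V → ℝ}
    (hy : y ∈ dualTransportPoly G V1 V2 z c) (hstep : IsDTCircuitStep G V1 V2 z c y y')
    (hw : IsDTCircuitWalk G V1 V2 z c k w y' y'') :
    IsDTCircuitWalk G V1 V2 z c (k + 1) (fun | 0 => y | i + 1 => w i) y y'' := by
  obtain ⟨hw0, hwk, hwP, hwstep⟩ := hw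
  refine ⟨rfl, hwk, ?_, ?_⟩
  · rintro (_ | i) hi
    exacts [hy, hwP i (by omega)]
  · rintro (_ | i) hi
    · rw [← hw0] at hstep
      exact hstep
    · exact hwstep i (by omega)

lemma neg_mem_dualTransportPoly_swap {u : V → ℝ} :
    -u ∈ dualTransportPoly G V2 V1 z (flip c) ↔ u ∈ dualTransportPoly G V1 V2 z c := by
  refine and_congr ⟨fun h a b ha hb hab => ?_, fun h a b ha hb hab => ?_⟩ neg_eq_zero
  · have := h b a hb ha hab.symm
    simp only [flip, Pi.neg_apply] at this
    linarith
  · have := h b a hb ha hab.symm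
    simp only [flip, Pi.neg_apply]
    linarith

lemma neg_mem_dualTransportCircuits {g : V → ℝ} (hg : g ∈ dualTransportCircuits G z) :
    -g ∈ dualTransportCircuits G z := by
  obtain ⟨R, S, hR, hS, hRS, hcover, hz, hRc, hSc, hsign⟩ := hg
  refine ⟨R, S, hR, hS, hRS, hcover, hz, hRc, hSc, ?_⟩
  simp only [Pi.neg_apply, neg_eq_iff_eq_neg, neg_zero, neg_neg]
  exact hsign.symm

lemma IsDTCircuitStep.of_neg_swap {y y' : V → ℝ}
    (h : IsDTCircuitStep G V2 V1 z (flip c) (-y) (-y')) : IsDTCircuitStep G V1 V2 z c y y' := by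
  obtain ⟨g, hg, α, hα, hy', hmax⟩ := h
  refine ⟨-g, neg_mem_dualTransportCircuits hg, α, hα, ?_, fun β hβ hP => hmax β hβ ?_⟩
  · rw [← neg_neg y', hy']
    module
  · convert neg_mem_dualTransportPoly_swap.2 hP using 1
    module

lemma exists_raise_step (hdisj : Disjoint V1 V2) (hG : G.Connected) {u y : V → ℝ}
    (hu : u ∈ dualTransportPoly G V1 V2 z c) (hy : y ∈ dualTransportPoly G V1 V2 z c)
    {A : Set V} (hzA : z ∈ A) (hA : A ⊆ G.reachWithin A z) (hagree : ∀ x ∈ A, y x = u x)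
    {p v : V} (hp : p ∈ V1) (hv : v ∈ V2) (hpA : p ∈ A) (hvA : v ∉ A) (hpv : G.Adj p v)
    (htight : -u p + u v = c p v) (hne : y v ≠ u v) :
    ∃ y', y' ∈ dualTransportPoly G V1 V2 z c ∧ IsDTCircuitStep G V1 V2 z c y y' ∧
      ∀ x ∈ insert v A, y' x = u x := by
  set τ := u v - y v
  have hτ : 0 < τ := by
    have := hy.1 p v hp hv hpv
    rw [hagree p hpA] at this
    exact sub_pos.2 (lt_of_le_of_ne (by linarith) hne)
  set K : Set V := insert v {a | a ∈ V1 ∧ G.Adj a v ∧ c a v + y a - y v < τ}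
  have hAK : A ⊆ Kᶜ := by
    rintro x hxA (rfl | ⟨hx, hxv, hslack⟩)
    · exact hvA hxA
    · have := hu.1 x v hx hv hxv
      rw [hagree x hxA] at hslack
      linarith
  have hzK : z ∈ Kᶜ := hAK hzA
  set R := G.reachWithin Kᶜ z
  have hvR : v ∉ R := fun h => reachWithin_subset hzK h (Set.mem_insert v _)
  have hAR : A ⊆ R := hA.trans (reachWithin_mono hAK)
  have hcross : ∀ a b, a ∈ V1 → b ∈ V2 → G.Adj a b → a ∈ R → b ∉ R →
      b = v ∧ τ ≤ c a b + y a - y b := by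
    intro a b ha hb hab haR hbR
    have haK : a ∉ K := reachWithin_subset hzK haR
    have hbK : b ∈ K := not_not.1 fun hbK => hbR (mem_reachWithin_of_adj haR hab haK hbK)
    rcases hbK with rfl | ⟨hb', -⟩
    · exact ⟨rfl, not_lt.1 fun hslack => haK (.inr ⟨ha, hab, hslack⟩)⟩
    · exact absurd hb (Set.disjoint_left.1 hdisj hb')
  set g : V → ℝ := Rᶜ.indicator 1
  have hg_in : ∀ x ∈ R, g x = 0 := fun x hx => Set.indicator_of_notMem (not_not.2 hx) _
  have hg_out : ∀ x ∉ R, g x = 1 := fun x hx => Set.indicator_of_mem hx _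
  have hg : g ∈ dualTransportCircuits G z := by
    refine ⟨R, Rᶜ, ⟨z, self_mem_reachWithin⟩, ⟨v, hvR⟩, disjoint_compl_right,
      Set.union_compl_self R, self_mem_reachWithin, connected_induce_reachWithin,
      connected_induce_compl_reachWithin hG hzK (not_not.2 (Set.mem_insert v _)) ?_,
      .inl ⟨hg_in, hg_out⟩⟩
    rintro x hx
    rcases not_not.1 hx with rfl | ⟨-, hxv, -⟩
    exacts [.inl rfl, .inr hxv]
  have hval : ∀ (t : ℝ) x, (y + t • g) x = y x + t * g x := fun _ _ => rfl
  refine ⟨y + τ • g, ⟨fun a b ha hb hab => ?_, ?_⟩, ⟨g, hg, τ, hτ, rfl, ?_⟩, ?_⟩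
  · have := hy.1 a b ha hb hab
    rw [hval, hval]
    by_cases haR : a ∈ R <;> by_cases hbR : b ∈ R
    · rw [hg_in a haR, hg_in b hbR]; linarith
    · obtain ⟨rfl, hslack⟩ := hcross a b ha hb hab haR hbR
      rw [hg_in a haR, hg_out b hbR]; linarith
    · rw [hg_out a haR, hg_in b hbR]; linarith
    · rw [hg_out a haR, hg_out b hbR]; linarith
  · rw [hval, hy.2, hg_in z self_mem_reachWithin, mul_zero, add_zero]
  · intro β hβ hP
    have := hP.1 p v hp hv hpv
    rw [hval, hval, hg_in p (hAR hpA), hg_out v hvR, hagree p hpA] at this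
    linarith
  · rintro x (rfl | hxA)
    · rw [hval, hg_out x hvR]; ring
    · rw [hval, hg_in x (hAR hxA), mul_zero, add_zero, hagree x hxA]

lemma exists_advance_step (hdisj : Disjoint V1 V2)
    (hbip : ∀ a b, G.Adj a b → (a ∈ V1 ∧ b ∈ V2) ∨ (a ∈ V2 ∧ b ∈ V1)) (hG : G.Connected)
    {u y : V → ℝ} (hu : u ∈ dualTransportPoly G V1 V2 z c)
    (hy : y ∈ dualTransportPoly G V1 V2 z c) {T : SimpleGraph V} (hT : T ≤ G)
    (htight : ∀ a b, a ∈ V1 → b ∈ V2 → T.Adj a b → -u a + u b = c a b)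
    {A : Set V} (hzA : z ∈ A) (hA : A ⊆ G.reachWithin A z) (hagree : ∀ x ∈ A, y x = u x)
    {p v : V} (hpA : p ∈ A) (hvA : v ∉ A) (hpv : T.Adj p v) :
    ∃ y', y' ∈ dualTransportPoly G V1 V2 z c ∧ (y' = y ∨ IsDTCircuitStep G V1 V2 z c y y') ∧
      ∀ x ∈ insert v A, y' x = u x := by
  by_cases hne : y v = u v
  · refine ⟨y, hy, .inl rfl, ?_⟩
    rintro x (rfl | hxA)
    exacts [hne, hagree x hxA]
  rcases hbip p v (hT hpv) with ⟨hp, hv⟩ | ⟨hp, hv⟩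
  · obtain ⟨y', hy', hstep, hagree'⟩ := exists_raise_step hdisj hG hu hy hzA hA hagree hp hv
      hpA hvA (hT hpv) (htight p v hp hv hpv) hne
    exact ⟨y', hy', .inr hstep, hagree'⟩
  · -- Negation swaps `V1` and `V2`, turning the required lowering step into a raising one.
    obtain ⟨y', hy', hstep, hagree'⟩ := exists_raise_step (V1 := V2) (V2 := V1) (c := flip c)
      hdisj.symm hG (neg_mem_dualTransportPoly_swap.2 hu) (neg_mem_dualTransportPoly_swap.2 hy)
      hzA hA (fun x hx => by simp only [Pi.neg_apply, hagree x hx]) hp hv hpA hvA (hT hpv)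
      (by have := htight v p hv hp hpv.symm; simp only [flip, Pi.neg_apply]; linarith)
      fun h => hne (neg_inj.1 h)
    refine ⟨-y', neg_mem_dualTransportPoly_swap.1 (by rwa [neg_neg]),
      .inr (IsDTCircuitStep.of_neg_swap (by rwa [neg_neg])), fun x hx => ?_⟩
    simp only [Pi.neg_apply, hagree' x hx, neg_neg]

open Finset in
lemma exists_walk_of_agree [Fintype V] [DecidableEq V] (hdisj : Disjoint V1 V2)
    (hbip : ∀ a b, G.Adj a b → (a ∈ V1 ∧ b ∈ V2) ∨ (a ∈ V2 ∧ b ∈ V1)) (hG : G.Connected)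
    {u : V → ℝ} (hu : u ∈ dualTransportPoly G V1 V2 z c) {T : SimpleGraph V} (hT : T ≤ G)
    (hTconn : T.Connected) (htight : ∀ a b, a ∈ V1 → b ∈ V2 → T.Adj a b → -u a + u b = c a b)
    {A : Finset V} {y : V → ℝ} (hy : y ∈ dualTransportPoly G V1 V2 z c) (hzA : z ∈ A)
    (hA : (A : Set V) ⊆ G.reachWithin A z) (hagree : ∀ x ∈ A, y x = u x) :
    ∃ k ≤ #Aᶜ, ∃ w, IsDTCircuitWalk G V1 V2 z c k w y u := by
  generalize hn : #Aᶜ = n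
  induction n generalizing A y with
  | zero =>
    obtain rfl : A = univ := by simpa using hn
    obtain rfl : y = u := funext fun x => hagree x (mem_univ x)
    exact ⟨0, le_rfl, _, .refl hy⟩
  | succ n ih =>
    obtain ⟨x, hx⟩ : ∃ x, x ∉ A := by
      by_contra! h
      simp [eq_univ_of_forall h] at hn
    obtain ⟨d, -, hpA, hvA⟩ := (hTconn.preconnected z x).some.exists_boundary_dart A hzA hx
    obtain ⟨y', hy', hstep, hagree'⟩ :=
      exists_advance_step hdisj hbip hG hu hy hT htight hzA hA hagree hpA hvA d.adj
    obtain ⟨k, hk, w, hw⟩ := ih hy' (mem_insert_of_mem hzA)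
      (by simpa only [coe_insert] using insert_subset_reachWithin_insert hA hpA (hT d.adj))
      (fun x hx => hagree' x (by simpa using hx))
      (by rw [compl_insert, card_erase_of_mem (mem_compl.2 hvA), hn, Nat.add_sub_cancel])
    rcases hstep with rfl | hstep
    · exact ⟨k, by omega, w, hw⟩
    · exact ⟨k + 1, by omega, _, hw.cons hy hstep⟩

end DualTransport

theorem stmt_11_general {V : Type*} [Fintype V] (G : SimpleGraph V)
    (V1 V2 : Set V) (z : V) (hdisj : Disjoint V1 V2)
    (hbip : ∀ a b, G.Adj a b → (a ∈ V1 ∧ b ∈ V2) ∨ (a ∈ V2 ∧ b ∈ V1))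
    (hGconn : G.Connected)
    (c : V → V → ℝ)
    (u1 u2 : V → ℝ)
    (hu1 : IsDTVertex G V1 V2 z c u1) (hu2 : IsDTVertex G V1 V2 z c u2) :
    ∃ k ≤ Fintype.card V - 1, ∃ y : ℕ → V → ℝ,
      IsDTCircuitWalk G V1 V2 z c k y u1 u2 := by
  classical
  obtain ⟨T, hT, hTconn, -, htight⟩ := hu2.2
  obtain ⟨k, hk, y, hw⟩ := exists_walk_of_agree hdisj hbip hGconn hu2.1 hT hTconn
    (fun a b ha hb hab => (htight a b ha hb (hT hab)).2 hab) hu1.1 (Finset.mem_singleton_self z)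
    (by simpa using SimpleGraph.self_mem_reachWithin) (by simp [hu1.1.2, hu2.1.2])
  exact ⟨k, by simpa [Finset.card_compl] using hk, y, hw⟩

/-- The circuit diameter of a generic dual transportation polyhedron on a
connected bipartite graph G is at most |V| - 1. -/
theorem stmt_11 {V : Type*} [Fintype V] (G : SimpleGraph V)
    (V1 V2 : Set V) (z : V) (hz : z ∈ V1)
    (hpart : V1 ∪ V2 = Set.univ) (hdisj : Disjoint V1 V2)
    (hbip : ∀ a b, G.Adj a b → (a ∈ V1 ∧ b ∈ V2) ∨ (a ∈ V2 ∧ b ∈ V1))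
    (hGconn : G.Connected)
    (c : V → V → ℝ)
    (u1 u2 : V → ℝ)
    (hu1 : IsDTVertex G V1 V2 z c u1) (hu2 : IsDTVertex G V1 V2 z c u2) :
    ∃ k ≤ Fintype.card V - 1, ∃ y : ℕ → V → ℝ,
      IsDTCircuitWalk G V1 V2 z c k y u1 u2 :=
  stmt_11_general G V1 V2 z hdisj hbip hGconn c u1 u2 hu1 hu2
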